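/- Let T: h → g be a relative Rota-Baxter operator of weight 1 with respect to an action (ρ,μ). Define ρ_T: h → gl(g) by ρ_T(u)(x) = [Tu,x]_g + T(ρ(x)u), μ_T: h⊗h → gl(g) by μ_T(u,v)(x) = {{x,Tu,Tv}}_g − T(D(x,Tu)v − μ(x,Tv)u), and D_T: h∧h → gl(g) by D_T(u,v)(x) = {{Tu,Tv,x}}_g − T(μ(Tv,x)u − μ(Tu,x)v). Then D_T = D_{ρ_T,μ_T}, i.e., D_T(u,v) = μ_T(v,u) − μ_T(u,v) + [ρ_T(u),ρ_T(v)] − ρ_T([u,v]_T). -/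

import Mathlib

/-- A Lie-Yamaguti algebra structure on a `K`-module `V`, given by a bilinear bracket `br`
and a trilinear bracket `tr`. -/
structure IsLYA (K : Type*) [Field K] (V : Type*) [AddCommGroup V] [Module K V]
    (br : V → V → V) (tr : V → V → V → V) : Prop where
  br_add_left : ∀ x y z : V, br (x + y) z = br x z + br y z
  br_smul_left : ∀ (a : K) (x y : V), br (a • x) y = a • br x y
  br_add_right : ∀ x y z : V, br x (y + z) = br x y + br x z
  br_smul_right : ∀ (a : K) (x y : V), br x (a • y) = a • br x y
  tr_add1 : ∀ x x' y z : V, tr (x + x') y z = tr x y z + tr x' y z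
  tr_smul1 : ∀ (a : K) (x y z : V), tr (a • x) y z = a • tr x y z
  tr_add2 : ∀ x y y' z : V, tr x (y + y') z = tr x y z + tr x y' z
  tr_smul2 : ∀ (a : K) (x y z : V), tr x (a • y) z = a • tr x y z
  tr_add3 : ∀ x y z z' : V, tr x y (z + z') = tr x y z + tr x y z'
  tr_smul3 : ∀ (a : K) (x y z : V), tr x y (a • z) = a • tr x y z
  br_skew : ∀ x y : V, br x y = - br y x
  tr_skew : ∀ x y z : V, tr x y z = - tr y x z
  ly1 : ∀ x y z : V,
    br (br x y) z + br (br y z) x + br (br z x) y + tr x y z + tr y z x + tr z x y = 0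
  ly2 : ∀ x y z w : V, tr (br x y) z w + tr (br y z) x w + tr (br z x) y w = 0
  ly3 : ∀ x y z w : V, tr x y (br z w) = br (tr x y z) w + br z (tr x y w)
  ly4 : ∀ x y z w t : V,
    tr x y (tr z w t) = tr (tr x y z) w t + tr z (tr x y w) t + tr z w (tr x y t)

/-- `D(x,y) = μ(y,x) - μ(x,y) + [ρ(x),ρ(y)] - ρ([x,y])`. -/
def Dmap {g V : Type*} [AddCommGroup V] (br : g → g → g)
    (ρ : g → V → V) (μ : g → g → V → V) (x y : g) (v : V) : V :=
  μ y x v - μ x y v + (ρ x (ρ y v) - ρ y (ρ x v)) - ρ (br x y) v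

/-- A representation of a Lie-Yamaguti algebra `(g, br, tr)` on a `K`-module `V`. -/
structure IsLYRep (K : Type*) [Field K] (g : Type*) [AddCommGroup g] [Module K g]
    (V : Type*) [AddCommGroup V] [Module K V]
    (br : g → g → g) (tr : g → g → g → g)
    (ρ : g → V → V) (μ : g → g → V → V) : Prop where
  ρ_add : ∀ (x y : g) (v : V), ρ (x + y) v = ρ x v + ρ y v
  ρ_smul : ∀ (a : K) (x : g) (v : V), ρ (a • x) v = a • ρ x v
  ρ_addv : ∀ (x : g) (u v : V), ρ x (u + v) = ρ x u + ρ x v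
  ρ_smulv : ∀ (x : g) (a : K) (v : V), ρ x (a • v) = a • ρ x v
  μ_add1 : ∀ (x y z : g) (v : V), μ (x + y) z v = μ x z v + μ y z v
  μ_smul1 : ∀ (a : K) (x y : g) (v : V), μ (a • x) y v = a • μ x y v
  μ_add2 : ∀ (x y z : g) (v : V), μ x (y + z) v = μ x y v + μ x z v
  μ_smul2 : ∀ (a : K) (x y : g) (v : V), μ x (a • y) v = a • μ x y v
  μ_addv : ∀ (x y : g) (u v : V), μ x y (u + v) = μ x y u + μ x y v
  μ_smulv : ∀ (x y : g) (a : K) (v : V), μ x y (a • v) = a • μ x y v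
  rep1 : ∀ (x y z : g) (v : V), μ (br x y) z v - μ x z (ρ y v) + μ y z (ρ x v) = 0
  rep2 : ∀ (x y z : g) (v : V), μ x (br y z) v - ρ y (μ x z v) + ρ z (μ x y v) = 0
  rep3 : ∀ (x y z : g) (v : V),
    ρ (tr x y z) v = Dmap br ρ μ x y (ρ z v) - ρ z (Dmap br ρ μ x y v)
  rep4 : ∀ (x y z w : g) (v : V),
    μ z w (μ x y v) - μ y w (μ x z v) - μ x (tr y z w) v + Dmap br ρ μ y z (μ x w v) = 0
  rep5 : ∀ (x y z w : g) (v : V),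
    μ (tr x y z) w v + μ z (tr x y w) v
      = Dmap br ρ μ x y (μ z w v) - μ z w (Dmap br ρ μ x y v)

/-- An action of a Lie-Yamaguti algebra `(g, brg, trg)` on a Lie-Yamaguti algebra
`(h, brh, trh)`: a representation valued in central elements annihilating all brackets. -/
structure IsLYAction (K : Type*) [Field K] (g : Type*) [AddCommGroup g] [Module K g]
    (h : Type*) [AddCommGroup h] [Module K h]
    (brg : g → g → g) (trg : g → g → g → g)
    (brh : h → h → h) (trh : h → h → h → h)
    (ρ : g → h → h) (μ : g → g → h → h) : Prop where
  rep : IsLYRep K g h brg trg ρ μ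
  ρ_cent_br : ∀ (x : g) (u v : h), brh (ρ x u) v = 0
  ρ_cent_tr1 : ∀ (x : g) (u v w : h), trh (ρ x u) v w = 0
  ρ_cent_tr3 : ∀ (x : g) (u v w : h), trh v w (ρ x u) = 0
  μ_cent_br : ∀ (x y : g) (u v : h), brh (μ x y u) v = 0
  μ_cent_tr1 : ∀ (x y : g) (u v w : h), trh (μ x y u) v w = 0
  μ_cent_tr3 : ∀ (x y : g) (u v w : h), trh v w (μ x y u) = 0
  ρ_ann_br : ∀ (x : g) (u v : h), ρ x (brh u v) = 0
  ρ_ann_tr : ∀ (x : g) (u v w : h), ρ x (trh u v w) = 0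
  μ_ann_br : ∀ (x y : g) (u v : h), μ x y (brh u v) = 0
  μ_ann_tr : ∀ (x y : g) (u v w : h), μ x y (trh u v w) = 0

/-- Relative Rota-Baxter operator of weight 1 from `(h, brh, trh)` to `(g, brg, trg)`
with respect to the action `(ρ, μ)`. -/
def IsRelRB (K : Type*) [Field K] {g h : Type*} [AddCommGroup g] [Module K g]
    [AddCommGroup h] [Module K h]
    (brg : g → g → g) (trg : g → g → g → g)
    (brh : h → h → h) (trh : h → h → h → h)
    (ρ : g → h → h) (μ : g → g → h → h) (T : h →ₗ[K] g) : Prop :=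
  (∀ u v : h, brg (T u) (T v) = T (ρ (T u) v - ρ (T v) u + brh u v)) ∧
  (∀ u v w : h, trg (T u) (T v) (T w)
    = T (Dmap brg ρ μ (T u) (T v) w + μ (T v) (T w) u - μ (T u) (T w) v + trh u v w))

/-- Binary bracket of the semidirect product Lie-Yamaguti algebra `g ⋉ h`. -/
def sdBr {g h : Type*} [AddCommGroup g] [AddCommGroup h]
    (brg : g → g → g) (brh : h → h → h) (ρ : g → h → h) (p q : g × h) : g × h :=
  (brg p.1 q.1, ρ p.1 q.2 - ρ q.1 p.2 + brh p.2 q.2)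

/-- Ternary bracket of the semidirect product Lie-Yamaguti algebra `g ⋉ h`. -/
def sdTr {g h : Type*} [AddCommGroup g] [AddCommGroup h]
    (brg : g → g → g) (trg : g → g → g → g) (trh : h → h → h → h)
    (ρ : g → h → h) (μ : g → g → h → h) (p q r : g × h) : g × h :=
  (trg p.1 q.1 r.1,
    Dmap brg ρ μ p.1 q.1 r.2 + μ q.1 r.1 p.2 - μ p.1 r.1 q.2 + trh p.2 q.2 r.2)

/-- Nijenhuis operator on a Lie-Yamaguti algebra. -/
def IsNijenhuis {V : Type*} [AddCommGroup V]
    (br : V → V → V) (tr : V → V → V → V) (N : V → V) : Prop :=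
  (∀ x y : V, br (N x) (N y) = N (br (N x) y + br x (N y) - N (br x y))) ∧
  (∀ x y z : V, tr (N x) (N y) (N z)
    = N (tr (N x) (N y) z + tr (N x) y (N z) + tr x (N y) (N z)
      - N (tr (N x) y z) - N (tr x (N y) z) - N (tr x y (N z)) + N (N (tr x y z))))

/-- The associator `(x,y,z) = (x*y)*z - x*(y*z)`. -/
def postAssoc {V : Type*} [AddCommGroup V] (star : V → V → V) (x y z : V) : V :=
  star (star x y) z - star x (star y z)

/-- The sub-adjacent binary bracket `[x,y]_C = x*y - y*x + x·y`. -/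
def postSubBr {V : Type*} [AddCommGroup V] (dot star : V → V → V) (x y : V) : V :=
  star x y - star y x + dot x y

/-- `{x,y,z}_D = {z,y,x} - {z,x,y} + (y,x,z) - (x,y,z) - (x·y)*z`. -/
def postDbr {V : Type*} [AddCommGroup V] (dot star : V → V → V)
    (curly : V → V → V → V) (x y z : V) : V :=
  curly z y x - curly z x y + postAssoc star y x z - postAssoc star x y z
    - star (dot x y) z

/-- The sub-adjacent ternary bracket
`{{x,y,z}}_C = {x,y,z}_D + {x,y,z} - {y,x,z} + ⟨x,y,z⟩`. -/
def postSubTr {V : Type*} [AddCommGroup V] (dot star : V → V → V)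
    (curly ang : V → V → V → V) (x y z : V) : V :=
  postDbr dot star curly x y z + curly x y z - curly y x z + ang x y z

/-- A post-Lie-Yamaguti algebra structure `(A, ·, *, {·,·,·}, ⟨·,·,·⟩)`. -/
structure IsPostLYA (K : Type*) [Field K] (V : Type*) [AddCommGroup V] [Module K V]
    (dot star : V → V → V) (curly ang : V → V → V → V) : Prop where
  lya : IsLYA K V dot ang
  star_add_left : ∀ x y z : V, star (x + y) z = star x z + star y z
  star_smul_left : ∀ (a : K) (x y : V), star (a • x) y = a • star x y
  star_add_right : ∀ x y z : V, star x (y + z) = star x y + star x z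
  star_smul_right : ∀ (a : K) (x y : V), star x (a • y) = a • star x y
  curly_add1 : ∀ x x' y z : V, curly (x + x') y z = curly x y z + curly x' y z
  curly_smul1 : ∀ (a : K) (x y z : V), curly (a • x) y z = a • curly x y z
  curly_add2 : ∀ x y y' z : V, curly x (y + y') z = curly x y z + curly x y' z
  curly_smul2 : ∀ (a : K) (x y z : V), curly x (a • y) z = a • curly x y z
  curly_add3 : ∀ x y z z' : V, curly x y (z + z') = curly x y z + curly x y z'
  curly_smul3 : ∀ (a : K) (x y z : V), curly x y (a • z) = a • curly x y z
  post1 : ∀ x y z w : V,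
    curly z (postSubBr dot star x y) w = curly (star y z) x w - curly (star x z) y w
  post2 : ∀ x y z w : V,
    curly x y (postSubBr dot star z w) = star z (curly x y w) - star w (curly x y z)
  post3 : ∀ x y z w : V,
    star (postSubTr dot star curly ang x y z) w
      = postDbr dot star curly x y (star z w) - star z (postDbr dot star curly x y w)
  post4 : ∀ x y z w t : V,
    curly x y (postSubTr dot star curly ang z w t)
      = curly (curly x y z) w t - curly (curly x y w) z t
        + curly z w (postDbr dot star curly x y t)
  post5 : ∀ x y z w t : V,
    curly x y (postDbr dot star curly z w t)
      = curly (postDbr dot star curly x y z) w t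
        + curly z (postSubTr dot star curly ang x y w) t
        + curly z w (postSubTr dot star curly ang x y t)
  post6a : ∀ x y z : V, dot (star x y) z = 0
  post6b : ∀ x y z w : V, ang (star x y) z w = 0
  post6c : ∀ x y z w : V, ang z w (star x y) = 0
  post7a : ∀ x y z : V, star x (dot y z) = 0
  post7b : ∀ x y z w : V, curly (dot x y) z w = 0
  post8a : ∀ x z w t : V, star x (ang z w t) = 0
  post8b : ∀ x y z w t : V, curly (ang z w t) x y = 0

/-- The descent binary bracket `[u,v]_T = ρ(Tu)v - ρ(Tv)u + [u,v]_h`. -/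
def brT {K : Type*} [Field K] {g h : Type*} [AddCommGroup g] [Module K g]
    [AddCommGroup h] [Module K h]
    (brh : h → h → h) (ρ : g → h → h) (T : h →ₗ[K] g) (u v : h) : h :=
  ρ (T u) v - ρ (T v) u + brh u v

/-- The descent ternary bracket
`{{u,v,w}}_T = D(Tu,Tv)w + μ(Tv,Tw)u - μ(Tu,Tw)v + {{u,v,w}}_h`. -/
def trT {K : Type*} [Field K] {g h : Type*} [AddCommGroup g] [Module K g]
    [AddCommGroup h] [Module K h]
    (brg : g → g → g) (trh : h → h → h → h)
    (ρ : g → h → h) (μ : g → g → h → h) (T : h →ₗ[K] g) (u v w : h) : h :=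
  Dmap brg ρ μ (T u) (T v) w + μ (T v) (T w) u - μ (T u) (T w) v + trh u v w

/-- `ρ_T(u)(x) = [Tu, x]_g + T(ρ(x)u)`. -/
def rhoT {K : Type*} [Field K] {g h : Type*} [AddCommGroup g] [Module K g]
    [AddCommGroup h] [Module K h]
    (brg : g → g → g) (ρ : g → h → h) (T : h →ₗ[K] g) (u : h) (x : g) : g :=
  brg (T u) x + T (ρ x u)

/-- `μ_T(u,v)(x) = {{x,Tu,Tv}}_g - T(D(x,Tu)v - μ(x,Tv)u)`. -/
def muT {K : Type*} [Field K] {g h : Type*} [AddCommGroup g] [Module K g]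
    [AddCommGroup h] [Module K h]
    (brg : g → g → g) (trg : g → g → g → g)
    (ρ : g → h → h) (μ : g → g → h → h) (T : h →ₗ[K] g) (u v : h) (x : g) : g :=
  trg x (T u) (T v) - T (Dmap brg ρ μ x (T u) v - μ x (T v) u)

/-- `D_T(u,v)(x) = {{Tu,Tv,x}}_g - T(μ(Tv,x)u - μ(Tu,x)v)`. -/
def DT {K : Type*} [Field K] {g h : Type*} [AddCommGroup g] [Module K g]
    [AddCommGroup h] [Module K h]
    (trg : g → g → g → g) (μ : g → g → h → h) (T : h →ₗ[K] g) (u v : h) (x : g) : g :=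
  trg (T u) (T v) x - T (μ (T v) x u - μ (T u) x v)

/-! Both sides split as an element of `g` plus `T` of an element of `h`. The operator identity
`[Tu, Tv]_g = T [u, v]_T` turns `ρ_T(u) ρ_T(v) x` and `ρ_T([u, v]_T) x` into such a sum, using
that `ρ` has central values and kills brackets of `h`. The `g`-parts then agree by the first
Lie-Yamaguti identity, and the `h`-parts by unfolding `D`. -/

namespace IsLYA

variable {K : Type*} [Field K] {V : Type*} [AddCommGroup V] [Module K V]
  {br : V → V → V} {tr : V → V → V → V}

theorem br_neg_left (hV : IsLYA K V br tr) (x y : V) : br (-x) y = -br x y := by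
  simpa using hV.br_smul_left (-1) x y

theorem tr_eq_tr_sub_tr_add_br (hV : IsLYA K V br tr) (x y z : V) :
    tr x y z = tr z y x - tr z x y + br x (br y z) - br y (br x z) - br (br x y) z := by
  have h := hV.ly1 x y z
  rw [hV.br_skew (br y z), hV.br_skew z x, hV.br_neg_left, hV.br_skew (br x z),
    hV.tr_skew y z] at h
  linear_combination (norm := abel) h

end IsLYA

namespace IsLYRep

variable {K : Type*} [Field K] {g : Type*} [AddCommGroup g] [Module K g]
  {V : Type*} [AddCommGroup V] [Module K V] {br : g → g → g} {tr : g → g → g → g}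
  {ρ : g → V → V} {μ : g → g → V → V}

theorem ρ_neg (R : IsLYRep K g V br tr ρ μ) (x : g) (v : V) : ρ (-x) v = -ρ x v :=
  (AddMonoidHom.mk' (ρ · v) (R.ρ_add · · v)).map_neg x

theorem ρ_subv (R : IsLYRep K g V br tr ρ μ) (x : g) (v w : V) :
    ρ x (v - w) = ρ x v - ρ x w :=
  (AddMonoidHom.mk' (ρ x) (R.ρ_addv x)).map_sub v w

end IsLYRep

section RelRB

variable {K : Type*} [Field K] {g h : Type*} [AddCommGroup g] [Module K g]
  [AddCommGroup h] [Module K h] {brg : g → g → g} {trg : g → g → g → g}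
  {brh : h → h → h} {trh : h → h → h → h} {ρ : g → h → h} {μ : g → g → h → h}
  {T : h →ₗ[K] g}

theorem IsLYAction.br_ρ_eq_zero (hh : IsLYA K h brh trh)
    (hact : IsLYAction K g h brg trg brh trh ρ μ) (x : g) (u v : h) :
    brh u (ρ x v) = 0 := by
  rw [hh.br_skew, hact.ρ_cent_br, neg_zero]

theorem IsRelRB.map_brT (hT : IsRelRB K brg trg brh trh ρ μ T) (u v : h) :
    brg (T u) (T v) = T (brT brh ρ T u v) :=
  hT.1 u v

theorem rhoT_rhoT (hg : IsLYA K g brg trg) (hh : IsLYA K h brh trh)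
    (hact : IsLYAction K g h brg trg brh trh ρ μ)
    (hbr : ∀ u v, brg (T u) (T v) = T (brT brh ρ T u v)) (u v : h) (x : g) :
    rhoT brg ρ T u (rhoT brg ρ T v x)
      = brg (T u) (brg (T v) x) + T (ρ (T u) (ρ x v) + ρ (brg (T v) x) u) := by
  rw [rhoT, rhoT, hg.br_add_right, hbr, brT, hact.rep.ρ_add,
    hact.br_ρ_eq_zero hh, map_add, map_add, map_add, map_sub, map_zero]
  abel

theorem rhoT_brT (hact : IsLYAction K g h brg trg brh trh ρ μ)
    (hbr : ∀ u v, brg (T u) (T v) = T (brT brh ρ T u v)) (u v : h) (x : g) :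
    rhoT brg ρ T (brT brh ρ T u v) x
      = brg (brg (T u) (T v)) x + T (ρ x (ρ (T u) v) - ρ x (ρ (T v) u)) := by
  rw [rhoT, ← hbr, brT, hact.rep.ρ_addv, hact.ρ_ann_br, add_zero, hact.rep.ρ_subv]

end RelRB

/-- `D_T = D_{ρ_T, μ_T}` for the induced maps of a relative Rota-Baxter
operator of weight 1. -/
theorem DT_eq_Dmap (K : Type*) [Field K]
    (g : Type*) [AddCommGroup g] [Module K g] (h : Type*) [AddCommGroup h] [Module K h]
    (brg : g → g → g) (trg : g → g → g → g) (brh : h → h → h) (trh : h → h → h → h)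
    (ρ : g → h → h) (μ : g → g → h → h)
    (hg : IsLYA K g brg trg) (hh : IsLYA K h brh trh)
    (hact : IsLYAction K g h brg trg brh trh ρ μ) (T : h →ₗ[K] g)
    (hT : IsRelRB K brg trg brh trh ρ μ T) :
    ∀ (u v : h) (x : g),
      DT trg μ T u v x
        = Dmap (brT brh ρ T) (rhoT brg ρ T) (muT brg trg ρ μ T) u v x := by
  intro u v x
  have hbr := hT.map_brT
  rw [DT, Dmap, rhoT_rhoT hg hh hact hbr, rhoT_rhoT hg hh hact hbr, rhoT_brT hact hbr,
    muT, muT, hg.tr_eq_tr_sub_tr_add_br (T u) (T v) x, Dmap, Dmap,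
    hg.br_skew x (T u), hg.br_skew x (T v), hact.rep.ρ_neg, hact.rep.ρ_neg]
  simp only [map_add, map_sub, map_neg]
  abel
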